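/- arXiv:2209.11911 — 2 statements merged into one kernel-verified Lean document; each statement's English description precedes it below -/
import Mathlib

section
/- Let C be the Cantor-integer sequence for strictly increasing f with f(0)=0, f(m)>m, and α = log(f(m)+1)/log(m+1). Then the set {C(n)/n^α : n ≥ 1} is dense in the closed interval [inf_{n≥1} C(n)/n^α, sup_{n≥1} C(n)/n^α]. -/
/-!
Write `b = m + 1`, `β = f m + 1`, `Q n = C n / n ^ α` and `P n = (C n + 1) / (n + 1) ^ α`.
The digit recursion `C (b q + d) = β C q + f d` and `b ^ α = β` give `Q (b n) = Q n` and
`P (b n + m) = P n`, while `C (k + 1) ≥ C k + 1` gives `P k ≤ Q (k + 1)`. Hence the intervals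
`[P (b n + d), Q (b n + d)]`, `d ≤ m`, cover `[P n, Q n]`; as their widths are `O(1 / n)`
(Bernoulli's inequality), every `[P n, Q n]` lies in the closure of the values of `Q`. If `x` lay
strictly between `inf Q` and `sup Q` but outside that closure, then `x ∉ [P n, Q n]` and
`P n ≤ Q (n + 1)` would keep `Q` above `x` once it exceeds `x`, contradicting
`Q (b ^ k * a) = Q a < x`.
-/

def cantorC (m : ℕ) (f : ℕ → ℕ) (n : ℕ) : ℕ :=
  Nat.ofDigits (f m + 1) ((Nat.digits (m + 1) n).map f)

open Set Filter Topology

section OrderTopology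

variable {α : Type*} [ConditionallyCompleteLinearOrder α] [TopologicalSpace α] [OrderTopology α]

theorem Icc_csInf_csSup_subset_closure_image {P Q : ℕ → α} {N : ℕ}
    (hbddBelow : BddBelow (Q '' Ici N)) (hbddAbove : BddAbove (Q '' Ici N))
    (hstep : ∀ k, P k ≤ Q (k + 1))
    (hfill : ∀ n ≥ N, Icc (P n) (Q n) ⊆ closure (Q '' Ici N))
    (hrecur : ∀ a ≥ N, ∀ M, ∃ n ≥ M, Q n = Q a) :
    Icc (sInf (Q '' Ici N)) (sSup (Q '' Ici N)) ⊆ closure (Q '' Ici N) := by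
  rintro x ⟨hinf, hsup⟩
  by_contra hx
  have hne : (Q '' Ici N).Nonempty := nonempty_Ici.image Q
  obtain ⟨_, ⟨a, ha, rfl⟩, hQa⟩ := exists_lt_of_csInf_lt hne <|
    hinf.lt_of_ne fun h ↦ hx (h ▸ csInf_mem_closure hne hbddBelow)
  obtain ⟨_, ⟨c, hc, rfl⟩, hQc⟩ := exists_lt_of_lt_csSup hne <|
    hsup.lt_of_ne' fun h ↦ hx (h ▸ csSup_mem_closure hne hbddAbove)
  have hlt : ∀ n ≥ c, x < Q n := by
    intro n hn
    induction n, hn using Nat.le_induction with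
    | base => exact hQc
    | succ n hcn ih =>
      have hP : x < P n := not_le.mp fun h ↦ hx (hfill n (le_trans hc hcn) ⟨h, ih.le⟩)
      exact hP.trans_le (hstep n)
  obtain ⟨n, hn, hQn⟩ := hrecur a ha c
  exact (hQa.trans (hQn ▸ hlt n hn)).false

end OrderTopology

theorem exists_mem_Icc_of_le_succ {α : Type*} [LinearOrder α] {P Q : ℕ → α}
    (hstep : ∀ k, P k ≤ Q (k + 1)) (s : ℕ) :
    ∀ m, ∀ y ∈ Icc (P (s + m)) (Q s), ∃ d ≤ m, y ∈ Icc (P (s + d)) (Q (s + d)) := by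
  intro m
  induction m with
  | zero => exact fun y hy ↦ ⟨0, le_rfl, hy⟩
  | succ m ih =>
    rintro y ⟨hPy, hyQ⟩
    rcases le_or_gt (P (s + m)) y with h | h
    · obtain ⟨d, hd, hy⟩ := ih y ⟨h, hyQ⟩
      exact ⟨d, hd.trans m.le_succ, hy⟩
    · exact ⟨m + 1, le_rfl, hPy, h.le.trans (hstep (s + m))⟩

theorem Nat.frequently_atTop_of_exists_gt {p : ℕ → Prop} {n : ℕ} (hn : p n)
    (h : ∀ n, p n → ∃ n' > n, p n') : ∃ᶠ n in atTop, p n := by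
  refine frequently_atTop.mpr fun a ↦ ?_
  induction a with
  | zero => exact ⟨n, n.zero_le, hn⟩
  | succ a ih =>
    obtain ⟨b, hab, hb⟩ := ih
    obtain ⟨b', hbb', hb'⟩ := h b hb
    exact ⟨b', hab.trans_lt hbb', hb'⟩

theorem mem_closure_image_of_frequently_mem_Icc {P Q u : ℕ → ℝ}
    (hwidth : ∀ n, Q n - P n ≤ u n) (hu : Tendsto u atTop (𝓝 0)) {y : ℝ}
    (hy : ∃ᶠ n in atTop, y ∈ Icc (P n) (Q n)) (N : ℕ) : y ∈ closure (Q '' Ici N) := by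
  refine Metric.mem_closure_iff.mpr fun ε hε ↦ ?_
  have hsmall : ∀ᶠ n in atTop, u n < ε ∧ N ≤ n :=
    (hu.eventually (gt_mem_nhds hε)).and (eventually_ge_atTop N)
  obtain ⟨n, ⟨hPy, hyQ⟩, hun, hn⟩ := (hy.and_eventually hsmall).exists
  refine ⟨Q n, mem_image_of_mem Q hn, ?_⟩
  rw [Real.dist_eq, abs_of_nonpos (by linarith)]
  linarith [hwidth n]

theorem Nat.exists_eq_succ_mul_add (m n : ℕ) : ∃ q, ∃ d ≤ m, n = (m + 1) * q + d :=
  ⟨n / (m + 1), n % (m + 1), Nat.lt_succ_iff.mp (n.mod_lt m.succ_pos), (n.div_add_mod _).symm⟩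

theorem one_sub_div_le_rpow_div_add_one {α : ℝ} (hα : 1 ≤ α) (x : ℝ) (hx : 0 ≤ x) :
    1 - α / (x + 1) ≤ (x / (x + 1)) ^ α := by
  have hs : -1 ≤ -1 / (x + 1) := by
    rw [le_div_iff₀ (by positivity)]
    linarith
  have hx1 : x / (x + 1) = 1 + -1 / (x + 1) := by field_simp; ring
  rw [hx1]
  convert one_add_mul_self_le_rpow_one_add hs hα using 1
  ring

section CantorInteger

variable {m : ℕ} {f : ℕ → ℕ}

theorem cantorC_zero : cantorC m f 0 = 0 := by simp [cantorC]

theorem cantorC_base_mul_add (hm : 1 ≤ m) (hf0 : f 0 = 0) (q : ℕ) {d : ℕ} (hd : d ≤ m) :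
    cantorC m f ((m + 1) * q + d) = (f m + 1) * cantorC m f q + f d := by
  by_cases h : d = 0 ∧ q = 0
  · obtain ⟨rfl, rfl⟩ := h
    simp [cantorC_zero, hf0]
  · rw [cantorC, add_comm ((m + 1) * q),
      Nat.digits_add (m + 1) (by omega) d q (by omega) (by tauto)]
    simp only [List.map_cons, Nat.ofDigits_cons, cantorC]
    ring

theorem cantorC_strictMono (hm : 1 ≤ m) (hf : StrictMonoOn f (Iic m)) (hf0 : f 0 = 0) :
    StrictMono (cantorC m f) := by
  refine strictMono_nat_of_lt_succ fun n ↦ ?_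
  induction n using Nat.strong_induction_on with
  | _ n ih =>
    obtain ⟨q, d, hd, rfl⟩ := Nat.exists_eq_succ_mul_add m n
    rcases hd.lt_or_eq with hd | hd
    · rw [add_assoc, cantorC_base_mul_add hm hf0 q hd, cantorC_base_mul_add hm hf0 q hd.le]
      exact Nat.add_lt_add_left (hf (mem_Iic.mpr hd.le) (mem_Iic.mpr hd) d.lt_succ_self) _
    · subst d
      have hq : q < (m + 1) * q + m := by nlinarith
      have hsucc : (m + 1) * q + m + 1 = (m + 1) * (q + 1) + 0 := by ring
      rw [hsucc, cantorC_base_mul_add hm hf0 _ m.zero_le, cantorC_base_mul_add hm hf0 q le_rfl, hf0]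
      nlinarith [ih q hq]

theorem cantorC_lt_pow (hm : 1 ≤ m) (hf : StrictMonoOn f (Iic m)) (hf0 : f 0 = 0) (k : ℕ) :
    ∀ n < (m + 1) ^ k, cantorC m f n < (f m + 1) ^ k := by
  induction k with
  | zero =>
    intro n hn
    obtain rfl : n = 0 := by simpa using hn
    simp [cantorC_zero]
  | succ k ih =>
    intro n hn
    obtain ⟨q, d, hd, rfl⟩ := Nat.exists_eq_succ_mul_add m n
    have hq : q < (m + 1) ^ k := by
      by_contra! h
      nlinarith [Nat.mul_le_mul_left (m + 1) h, pow_succ' (m + 1) k]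
    have hfd : f d ≤ f m := hf.monotoneOn (mem_Iic.mpr hd) (mem_Iic.mpr le_rfl) hd
    rw [cantorC_base_mul_add hm hf0 q hd, pow_succ']
    nlinarith [ih q hq]

variable (m f) (α : ℝ)

noncomputable def cantorRatio (n : ℕ) : ℝ := cantorC m f n / (n : ℝ) ^ α

noncomputable def cantorLowerRatio (n : ℕ) : ℝ :=
  (cantorC m f n + 1 : ℝ) / ((n : ℝ) + 1) ^ α

variable {m f α}

theorem cantorRatio_base_mul (hm : 1 ≤ m) (hf0 : f 0 = 0) (hα : ((m : ℝ) + 1) ^ α = f m + 1)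
    (n : ℕ) : cantorRatio m f α ((m + 1) * n) = cantorRatio m f α n := by
  have hC : (cantorC m f ((m + 1) * n) : ℝ) = (f m + 1) * cantorC m f n := by
    simpa [hf0] using congrArg (Nat.cast (R := ℝ)) (cantorC_base_mul_add hm hf0 n m.zero_le)
  rw [cantorRatio, cantorRatio, hC, Nat.cast_mul, Real.mul_rpow (by positivity) (by positivity)]
  push_cast
  rw [hα, mul_div_mul_left _ _ (by positivity)]

theorem cantorRatio_base_pow_mul (hm : 1 ≤ m) (hf0 : f 0 = 0)
    (hα : ((m : ℝ) + 1) ^ α = f m + 1) (k n : ℕ) :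
    cantorRatio m f α ((m + 1) ^ k * n) = cantorRatio m f α n := by
  induction k with
  | zero => rw [pow_zero, one_mul]
  | succ k ih => rw [pow_succ', mul_assoc, cantorRatio_base_mul hm hf0 hα, ih]

theorem cantorLowerRatio_base_mul_add_self (hm : 1 ≤ m) (hf0 : f 0 = 0)
    (hα : ((m : ℝ) + 1) ^ α = f m + 1) (n : ℕ) :
    cantorLowerRatio m f α ((m + 1) * n + m) = cantorLowerRatio m f α n := by
  have hC : (cantorC m f ((m + 1) * n + m) + 1 : ℝ) = (f m + 1) * (cantorC m f n + 1) := by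
    rw [cantorC_base_mul_add hm hf0 n le_rfl]
    push_cast
    ring
  have hn : (((m + 1) * n + m : ℕ) : ℝ) + 1 = ((m : ℝ) + 1) * (n + 1) := by push_cast; ring
  rw [cantorLowerRatio, cantorLowerRatio, hC, hn, Real.mul_rpow (by positivity) (by positivity),
    hα, mul_div_mul_left _ _ (by positivity)]

theorem cantorLowerRatio_le_cantorRatio_succ (hm : 1 ≤ m) (hf : StrictMonoOn f (Iic m))
    (hf0 : f 0 = 0) (n : ℕ) : cantorLowerRatio m f α n ≤ cantorRatio m f α (n + 1) := by
  rw [cantorLowerRatio, cantorRatio, Nat.cast_succ]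
  gcongr
  exact_mod_cast cantorC_strictMono hm hf hf0 n.lt_succ_self

theorem cantorRatio_le (hm : 1 ≤ m) (hf : StrictMonoOn f (Iic m)) (hf0 : f 0 = 0)
    (hα : ((m : ℝ) + 1) ^ α = f m + 1) (hα0 : 0 ≤ α) (n : ℕ) :
    cantorRatio m f α n ≤ f m + 1 := by
  rcases eq_or_ne n 0 with rfl | hn
  · simp only [cantorRatio, cantorC_zero, Nat.cast_zero, zero_div]
    positivity
  set k := Nat.log (m + 1) n
  have hC : (cantorC m f n : ℝ) ≤ (f m + 1) ^ (k + 1) := by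
    exact_mod_cast (cantorC_lt_pow hm hf hf0 _ n (Nat.lt_pow_succ_log_self (by omega) n)).le
  have hpow : ((f m : ℝ) + 1) ^ k ≤ (n : ℝ) ^ α := by
    rw [← hα, Real.rpow_pow_comm (by positivity)]
    gcongr
    exact_mod_cast Nat.pow_log_le_self (m + 1) hn
  calc cantorRatio m f α n ≤ ((f m : ℝ) + 1) ^ (k + 1) / ((f m : ℝ) + 1) ^ k := by
        rw [cantorRatio]
        gcongr
    _ = f m + 1 := by rw [pow_succ, mul_div_cancel_left₀ _ (by positivity)]

theorem cantorRatio_sub_cantorLowerRatio_le (hm : 1 ≤ m) (hf : StrictMonoOn f (Iic m))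
    (hf0 : f 0 = 0) (hα : ((m : ℝ) + 1) ^ α = f m + 1) (hα1 : 1 ≤ α) (n : ℕ) :
    cantorRatio m f α n - cantorLowerRatio m f α n ≤ α * (f m + 1) / (n + 1) := by
  rcases eq_or_ne n 0 with rfl | hn
  · have : 0 ≤ α * ((f m : ℝ) + 1) := mul_nonneg (by linarith) (by positivity)
    norm_num [cantorRatio, cantorLowerRatio, cantorC_zero]
    linarith
  have hn0 : (0 : ℝ) < n := by positivity
  have hQ0 : 0 ≤ cantorRatio m f α n := by rw [cantorRatio]; positivity
  have hC : (cantorC m f n : ℝ) / ((n : ℝ) + 1) ^ α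
      = cantorRatio m f α n * ((n : ℝ) / (n + 1)) ^ α := by
    rw [Real.div_rpow hn0.le (by positivity), cantorRatio]
    field_simp [(Real.rpow_pos_of_pos hn0 α).ne']
  calc cantorRatio m f α n - cantorLowerRatio m f α n
      ≤ cantorRatio m f α n - (cantorC m f n : ℝ) / ((n : ℝ) + 1) ^ α := by
        rw [cantorLowerRatio]
        gcongr
        linarith
    _ = cantorRatio m f α n * (1 - ((n : ℝ) / (n + 1)) ^ α) := by rw [hC]; ring
    _ ≤ cantorRatio m f α n * (α / (n + 1)) := by
        gcongr
        linarith [one_sub_div_le_rpow_div_add_one hα1 (n : ℝ) hn0.le]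
    _ ≤ (f m + 1) * (α / (n + 1)) := by
        gcongr
        exact cantorRatio_le hm hf hf0 hα (by linarith) n
    _ = α * (f m + 1) / (n + 1) := by ring

theorem Icc_cantorLowerRatio_subset_closure (hm : 1 ≤ m) (hf : StrictMonoOn f (Iic m))
    (hf0 : f 0 = 0) (hα : ((m : ℝ) + 1) ^ α = f m + 1) (hα1 : 1 ≤ α) {n : ℕ} (hn : 1 ≤ n) :
    Icc (cantorLowerRatio m f α n) (cantorRatio m f α n) ⊆
      closure (cantorRatio m f α '' Ici 1) := by
  intro y hy
  have hrefine : ∀ k, 1 ≤ k ∧ y ∈ Icc (cantorLowerRatio m f α k) (cantorRatio m f α k) →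
      ∃ k' > k, 1 ≤ k' ∧ y ∈ Icc (cantorLowerRatio m f α k') (cantorRatio m f α k') := by
    rintro k ⟨hk, hyk⟩
    rw [← cantorRatio_base_mul hm hf0 hα k,
      ← cantorLowerRatio_base_mul_add_self hm hf0 hα k] at hyk
    obtain ⟨d, -, hd⟩ := exists_mem_Icc_of_le_succ
      (cantorLowerRatio_le_cantorRatio_succ hm hf hf0) _ m y hyk
    exact ⟨(m + 1) * k + d, by nlinarith, by nlinarith, hd⟩
  have hwidth : Tendsto (fun k : ℕ ↦ α * (f m + 1) / ((k : ℝ) + 1)) atTop (𝓝 0) := by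
    simpa [div_eq_mul_inv] using tendsto_one_div_add_atTop_nhds_zero_nat.const_mul (α * (f m + 1))
  exact mem_closure_image_of_frequently_mem_Icc
    (cantorRatio_sub_cantorLowerRatio_le hm hf hf0 hα hα1) hwidth
    ((Nat.frequently_atTop_of_exists_gt ⟨hn, hy⟩ hrefine).mono fun _ h ↦ h.2) 1

end CantorInteger

theorem cantor_integers_dense_general (m : ℕ) (hm : 1 ≤ m) (f : ℕ → ℕ)
    (hf : ∀ i j, i < j → j ≤ m → f i < f j) (hf0 : f 0 = 0)
    (α : ℝ) (hα : α = Real.log (f m + 1) / Real.log (m + 1)) :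
    Set.Icc (sInf {x : ℝ | ∃ n : ℕ, 1 ≤ n ∧ x = (cantorC m f n : ℝ) / (n : ℝ) ^ α})
        (sSup {x : ℝ | ∃ n : ℕ, 1 ≤ n ∧ x = (cantorC m f n : ℝ) / (n : ℝ) ^ α}) ⊆
      closure {x : ℝ | ∃ n : ℕ, 1 ≤ n ∧ x = (cantorC m f n : ℝ) / (n : ℝ) ^ α} := by
  have hmono : StrictMonoOn f (Iic m) := fun i _ j hj hij ↦ hf i j hij hj
  have hm1 : (1 : ℝ) < m + 1 := by norm_cast; omega
  have hbase : ((m : ℝ) + 1) ^ α = f m + 1 := by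
    rw [hα, ← Real.logb]
    exact Real.rpow_logb (by positivity) hm1.ne' (by positivity)
  have hα1 : 1 ≤ α := by
    rw [hα, one_le_div (Real.log_pos hm1)]
    have hmf : m + 1 ≤ f m + 1 := Nat.succ_le_succ (hmono.Iic_id_le m le_rfl)
    exact Real.log_le_log (by positivity) (by exact_mod_cast hmf)
  have hS : {x : ℝ | ∃ n : ℕ, 1 ≤ n ∧ x = (cantorC m f n : ℝ) / (n : ℝ) ^ α}
      = cantorRatio m f α '' Ici 1 := by
    ext x
    simp [cantorRatio, eq_comm]
  rw [hS]
  refine Icc_csInf_csSup_subset_closure_image ⟨0, ?_⟩ ⟨f m + 1, ?_⟩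
    (cantorLowerRatio_le_cantorRatio_succ hm hmono hf0)
    (fun n hn ↦ Icc_cantorLowerRatio_subset_closure hm hmono hf0 hbase hα1 hn)
    fun a ha M ↦ ⟨(m + 1) ^ M * a, ?_, cantorRatio_base_pow_mul hm hf0 hbase M a⟩
  · rintro _ ⟨n, -, rfl⟩
    rw [cantorRatio]
    positivity
  · rintro _ ⟨n, -, rfl⟩
    exact cantorRatio_le hm hmono hf0 hbase (by linarith) n
  · calc M ≤ (m + 1) ^ M := (Nat.lt_pow_self (by omega)).le
      _ ≤ (m + 1) ^ M * a := Nat.le_mul_of_pos_right _ ha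

theorem cantor_integers_dense (m : ℕ) (hm : 1 ≤ m) (f : ℕ → ℕ)
    (hf : ∀ i j, i < j → j ≤ m → f i < f j) (hf0 : f 0 = 0) (hfm : m < f m)
    (α : ℝ) (hα : α = Real.log (f m + 1) / Real.log (m + 1)) :
    Set.Icc (sInf {x : ℝ | ∃ n : ℕ, 1 ≤ n ∧ x = (cantorC m f n : ℝ) / (n : ℝ) ^ α})
        (sSup {x : ℝ | ∃ n : ℕ, 1 ≤ n ∧ x = (cantorC m f n : ℝ) / (n : ℝ) ^ α}) ⊆
      closure {x : ℝ | ∃ n : ℕ, 1 ≤ n ∧ x = (cantorC m f n : ℝ) / (n : ℝ) ^ α} :=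
  cantor_integers_dense_general m hm f hf hf0 α hα
end

section
/- Let ΔC(n) = C(n) − C(n−1) for the Cantor-integer sequence C with strictly increasing f, f(0)=0, f(m)>m. Then for every n ≥ 1, ΔC((m+1)n) = (f(m)+1)·ΔC(n) − f(m), and for every n ≥ 0 and r ∈ {1,...,m}, ΔC((m+1)n+r) = f(r) − f(r−1). -/
lemma cantorC_key (m : ℕ) (hm : 1 ≤ m) (f : ℕ → ℕ) (hf0 : f 0 = 0)
    (n r : ℕ) (hr : r ≤ m) :
    cantorC m f ((m + 1) * n + r) = f r + (f m + 1) * cantorC m f n := by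
  rcases Nat.eq_zero_or_pos ((m + 1) * n + r) with h | h
  · have hr0 : r = 0 := by omega
    have hn0 : n = 0 := by
      rcases Nat.mul_eq_zero.mp (by omega : (m + 1) * n = 0) with h' | h' <;> omega
    subst hr0; subst hn0
    simp [cantorC, hf0]
  · unfold cantorC
    rw [Nat.digits_def' (by omega : 1 < m + 1) (by omega)]
    have hmod : ((m + 1) * n + r) % (m + 1) = r := by
      rw [Nat.mul_add_mod, Nat.mod_eq_of_lt (by omega)]
    have hdiv : ((m + 1) * n + r) / (m + 1) = n := by
      rw [Nat.mul_add_div (by omega), Nat.div_eq_of_lt (by omega)]; omega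
    rw [hmod, hdiv]
    simp [Nat.ofDigits_cons]

theorem cantor_integers_difference_recursion (m : ℕ) (hm : 1 ≤ m) (f : ℕ → ℕ)
    (hf : ∀ i j, i < j → j ≤ m → f i < f j) (hf0 : f 0 = 0) (hfm : m < f m) :
    (∀ n : ℕ, 1 ≤ n →
        (cantorC m f ((m + 1) * n) : ℤ) - cantorC m f ((m + 1) * n - 1) =
          ((f m : ℤ) + 1) * ((cantorC m f n : ℤ) - cantorC m f (n - 1)) - f m) ∧
      (∀ n : ℕ, ∀ r : ℕ, 1 ≤ r → r ≤ m →
        (cantorC m f ((m + 1) * n + r) : ℤ) - cantorC m f ((m + 1) * n + r - 1) =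
          (f r : ℤ) - f (r - 1)) := by
  constructor
  · intro n hn
    have h1 : cantorC m f ((m + 1) * n) = (f m + 1) * cantorC m f n := by
      have := cantorC_key m hm f hf0 n 0 (by omega)
      simpa [hf0] using this
    have h2 : (m + 1) * n - 1 = (m + 1) * (n - 1) + m := by
      obtain ⟨k, rfl⟩ := Nat.exists_eq_add_of_le hn
      have : (m + 1) * (1 + k) = (m + 1) * k + m + 1 := by ring
      simp only [Nat.add_sub_cancel_left] at *
      omega
    rw [h1, h2, cantorC_key m hm f hf0 (n - 1) m le_rfl]
    push_cast
    ring
  · intro n r hr1 hrm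
    have h2 : (m + 1) * n + r - 1 = (m + 1) * n + (r - 1) := by omega
    rw [cantorC_key m hm f hf0 n r hrm, h2,
      cantorC_key m hm f hf0 n (r - 1) (by omega)]
    push_cast
    ring
end
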